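/- arXiv:2309.00806 — 6 statements merged into one kernel-verified Lean document; each statement's English description precedes it below -/
import Mathlib

section
/- Let f ∈ F[x_1,…,x_n] be a polynomial over a field F that has degree exactly one in each of the variables x_i and x_j (i ≠ j). Define the Rayleigh difference Δ_ij(f) = (∂f/∂x_i)(∂f/∂x_j) − f·(∂²f/∂x_i∂x_j). Then Δ_ij(f) = 0 if and only if f factors as g·h where g does not involve x_i and h does not involve x_j. -/
open MvPolynomial

/-- The Rayleigh difference of `f` with respect to variables `i` and `j`. -/
noncomputable def rayleighDiff {n : ℕ} {F : Type*} [Field F]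
    (i j : Fin n) (f : MvPolynomial (Fin n) F) : MvPolynomial (Fin n) F :=
  pderiv i f * pderiv j f - f * pderiv i (pderiv j f)

namespace RayleighAux

variable {n : ℕ} {F : Type*} [Field F]

lemma pderiv_sum_repr (j : Fin n) (f : MvPolynomial (Fin n) F) :
    pderiv j f
      = ∑ m ∈ f.support, monomial (m - Finsupp.single j 1) (coeff m f * m j) := by
  conv_lhs => rw [f.as_sum]
  rw [map_sum]
  simp [pderiv_monomial]

lemma degreeOf_pderiv_le {j k : Fin n} (hkj : k ≠ j) (f : MvPolynomial (Fin n) F) :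
    degreeOf k (pderiv j f) ≤ degreeOf k f := by
  rw [pderiv_sum_repr]
  refine (degreeOf_sum_le _ _ _).trans (Finset.sup_le fun m hm => ?_)
  by_cases hc : coeff m f * m j = 0
  · simp [hc]
  · rw [degreeOf_monomial_eq _ _ hc, Finsupp.tsub_apply, Finsupp.single_apply,
      if_neg (fun h => hkj h.symm)]
    exact le_trans (Nat.sub_le _ _) (monomial_le_degreeOf k hm)

lemma degreeOf_pderiv_self {j : Fin n} {f : MvPolynomial (Fin n) F}
    (h : degreeOf j f ≤ 1) : degreeOf j (pderiv j f) = 0 := by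
  rw [pderiv_sum_repr]
  refine Nat.le_zero.mp ((degreeOf_sum_le _ _ _).trans (Finset.sup_le fun m hm => ?_))
  by_cases hc : coeff m f * m j = 0
  · simp [hc]
  · rw [degreeOf_monomial_eq _ _ hc, Finsupp.tsub_apply, Finsupp.single_apply, if_pos rfl]
    have := degreeOf_le_iff.mp h m hm
    omega

lemma pderiv_eq_zero_of_degreeOf_eq_zero {j : Fin n} {f : MvPolynomial (Fin n) F}
    (h : degreeOf j f = 0) : pderiv j f = 0 := by
  rw [pderiv_sum_repr]
  refine Finset.sum_eq_zero fun m hm => ?_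
  have hmj : m j = 0 := Nat.le_zero.mp (h ▸ monomial_le_degreeOf j hm)
  simp [hmj]

lemma decomp (j : Fin n) (f : MvPolynomial (Fin n) F) (h : degreeOf j f ≤ 1) :
    ∃ p : MvPolynomial (Fin n) F, f = p + pderiv j f * X j ∧ degreeOf j p = 0 ∧
      ∀ k, degreeOf k p ≤ degreeOf k f := by
  classical
  refine ⟨∑ m ∈ f.support.filter (fun m => m j = 0), monomial m (coeff m f), ?_, ?_, ?_⟩
  · have h1 : ∑ m ∈ f.support.filter (fun m => ¬ m j = 0),
        monomial (m - Finsupp.single j 1) (coeff m f * m j) * X j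
        = ∑ m ∈ f.support.filter (fun m => ¬ m j = 0), monomial m (coeff m f) := by
      refine Finset.sum_congr rfl fun m hm => ?_
      obtain ⟨hms, hmj⟩ := Finset.mem_filter.mp hm
      have h1 : m j = 1 :=
        le_antisymm (degreeOf_le_iff.mp h m hms) (Nat.one_le_iff_ne_zero.mpr hmj)
      have hsub : (m - Finsupp.single j 1) + Finsupp.single j 1 = m := by
        ext k
        by_cases hk : k = j
        · subst hk
          simp [Finsupp.single_apply, h1]
        · simp [Finsupp.single_apply, Ne.symm hk]
      rw [h1, Nat.cast_one, mul_one, ← pow_one (X j : MvPolynomial (Fin n) F), ← monomial_add_single, hsub]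
    have h0 : ∑ m ∈ f.support.filter (fun m => m j = 0),
        monomial (m - Finsupp.single j 1) (coeff m f * m j) * X j = 0 := by
      refine Finset.sum_eq_zero fun m hm => ?_
      simp [(Finset.mem_filter.mp hm).2]
    conv_lhs => rw [f.as_sum,
      ← Finset.sum_filter_add_sum_filter_not f.support (fun m => m j = 0)]
    rw [pderiv_sum_repr, Finset.sum_mul,
      ← Finset.sum_filter_add_sum_filter_not f.support (fun m => m j = 0)
        (fun m => monomial (m - Finsupp.single j 1) (coeff m f * m j) * X j),
      h0, h1, zero_add]
  · refine Nat.le_zero.mp ((degreeOf_sum_le _ _ _).trans (Finset.sup_le fun m hm => ?_))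
    by_cases hc : coeff m f = 0
    · simp [hc]
    · rw [degreeOf_monomial_eq _ _ hc, (Finset.mem_filter.mp hm).2]
  · intro k
    refine (degreeOf_sum_le _ _ _).trans (Finset.sup_le fun m hm => ?_)
    by_cases hc : coeff m f = 0
    · simp [hc]
    · rw [degreeOf_monomial_eq _ _ hc]
      exact monomial_le_degreeOf k (Finset.mem_filter.mp hm).1

lemma degreeOf_mul_eq_add (i : Fin n) {p q : MvPolynomial (Fin n) F}
    (hp : p ≠ 0) (hq : q ≠ 0) :
    degreeOf i (p * q) = degreeOf i p + degreeOf i q := by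
  cases n with
  | zero => exact i.elim0
  | succ m =>
    set e : Fin (m + 1) ≃ Fin (m + 1) := Equiv.swap i 0 with he
    have hre : ∀ r : MvPolynomial (Fin (m + 1)) F,
        degreeOf i r = (finSuccEquiv F m (rename e r)).natDegree := by
      intro r
      rw [natDegree_finSuccEquiv,
        ← degreeOf_rename_of_injective (e.injective) i, he, Equiv.swap_apply_left]
    have hren : ∀ r : MvPolynomial (Fin (m + 1)) F, r ≠ 0 →
        finSuccEquiv F m (rename e r) ≠ 0 := by
      intro r hr hzero
      apply hr
      have : rename e r = 0 := by
        apply (finSuccEquiv F m).injective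
        simpa using hzero
      exact (rename_injective e e.injective) (by simpa using this)
    rw [hre, hre, hre, map_mul, map_mul, Polynomial.natDegree_mul (hren p hp) (hren q hq)]

lemma degreeOf_eq_zero_of_dvd (i : Fin n) {p q : MvPolynomial (Fin n) F}
    (hd : p ∣ q) (hq : q ≠ 0) (h : degreeOf i q = 0) : degreeOf i p = 0 := by
  obtain ⟨r, rfl⟩ := hd
  have := degreeOf_mul_eq_add i (left_ne_zero_of_mul hq) (right_ne_zero_of_mul hq)
  omega

end RayleighAux

open RayleighAux

theorem rayleighDiff_eq_zero_iff_factors {n : ℕ} {F : Type*} [Field F]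
    (i j : Fin n) (hij : i ≠ j) (f : MvPolynomial (Fin n) F)
    (hi : f.degreeOf i = 1) (hj : f.degreeOf j = 1) :
    rayleighDiff i j f = 0 ↔
      ∃ g h : MvPolynomial (Fin n) F,
        f = g * h ∧ g.degreeOf i = 0 ∧ h.degreeOf j = 0 := by
  classical
  obtain ⟨p, hfp, hpj, hpk⟩ := decomp j f hj.le
  set q : MvPolynomial (Fin n) F := pderiv j f with hqdef
  have hqi : degreeOf i q ≤ 1 := (degreeOf_pderiv_le hij f).trans hi.le
  have hpi : degreeOf i p ≤ 1 := (hpk i).trans hi.le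
  obtain ⟨dd, hpd, hddi, hddk⟩ := decomp i p hpi
  obtain ⟨cc, hqc, hcci, hcck⟩ := decomp i q hqi
  set b : MvPolynomial (Fin n) F := pderiv i p with hbdef
  set a : MvPolynomial (Fin n) F := pderiv i q with hadef
  -- degrees of the four "coefficients"
  have hqj : degreeOf j q = 0 := degreeOf_pderiv_self hj.le
  have hia : degreeOf i a = 0 := degreeOf_pderiv_self hqi
  have hja : degreeOf j a = 0 :=
    Nat.le_zero.mp ((degreeOf_pderiv_le (Ne.symm hij) q).trans hqj.le)
  have hib : degreeOf i b = 0 := degreeOf_pderiv_self hpi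
  have hjb : degreeOf j b = 0 :=
    Nat.le_zero.mp ((degreeOf_pderiv_le (Ne.symm hij) p).trans hpj.le)
  have hjcc : degreeOf j cc = 0 := Nat.le_zero.mp ((hcck j).trans hqj.le)
  have hjdd : degreeOf j dd = 0 := Nat.le_zero.mp ((hddk j).trans hpj.le)
  have hXji : degreeOf i (X j : MvPolynomial (Fin n) F) = 0 := by
    rw [degreeOf_X, if_neg hij]
  have hXij : degreeOf j (X i : MvPolynomial (Fin n) F) = 0 := by
    rw [degreeOf_X, if_neg (Ne.symm hij)]
  -- the Rayleigh difference equals b * cc - a * dd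
  have hdf : pderiv i f = b + a * X j := by
    conv_lhs => rw [hfp]
    rw [map_add, pderiv_mul, pderiv_X_of_ne (Ne.symm hij), mul_zero, add_zero,
      ← hbdef, ← hadef]
  have hΔ : rayleighDiff i j f = b * cc - a * dd := by
    simp only [rayleighDiff]
    rw [hdf, ← hqdef, ← hadef]
    conv_lhs => rw [hfp, hpd, hqc]
    ring
  -- nonvanishing facts
  have hab : ¬(a = 0 ∧ b = 0) := by
    rintro ⟨ha0, hb0⟩
    have : degreeOf i f = 0 := by
      rw [hfp, hpd, hqc, hb0, ha0]
      simp only [zero_mul, add_zero]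
      refine Nat.le_zero.mp ((degreeOf_add_le _ _ _).trans ?_)
      refine max_le hddi.le (le_trans (degreeOf_mul_le _ _ _) ?_)
      simp [hcci, hXji]
    omega
  have hac : ¬(a = 0 ∧ cc = 0) := by
    rintro ⟨ha0, hc0⟩
    have hq0 : q = 0 := by rw [hqc, ha0, hc0, zero_mul, add_zero]
    have : degreeOf j f = 0 := by
      rw [hfp, hq0, zero_mul, add_zero]
      exact hpj
    omega
  constructor
  · intro hzero
    have hbcad : b * cc = a * dd := by
      exact sub_eq_zero.mp (hΔ.symm.trans hzero)
    have ha : a ≠ 0 := by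
      intro ha0
      rw [ha0, zero_mul] at hbcad
      rcases mul_eq_zero.mp hbcad with hb0 | hc0
      · exact hab ⟨ha0, hb0⟩
      · exact hac ⟨ha0, hc0⟩
    obtain ⟨a1, b1, e, hcop, hea, heb⟩ :=
      UniqueFactorizationMonoid.exists_reduced_factors a ha b
    have he : e ≠ 0 := fun h0 => ha (by rw [← hea, h0, zero_mul])
    have ha1 : a1 ≠ 0 := fun h0 => ha (by rw [← hea, h0, mul_zero])
    have hb1c : b1 * cc = a1 * dd := by
      have : e * (b1 * cc) = e * (a1 * dd) := by
        calc e * (b1 * cc) = (e * b1) * cc := by ring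
        _ = b * cc := by rw [heb]
        _ = a * dd := hbcad
        _ = (e * a1) * dd := by rw [hea]
        _ = e * (a1 * dd) := by ring
      exact mul_left_cancel₀ he this
    have ha1cc : a1 ∣ cc := by
      exact hcop.dvd_of_dvd_mul_left ⟨dd, hb1c⟩
    obtain ⟨c1, hc1⟩ := ha1cc
    have hdd : dd = b1 * c1 := by
      have : a1 * dd = a1 * (b1 * c1) := by
        rw [← hb1c, hc1]; ring
      exact mul_left_cancel₀ ha1 this
    refine ⟨a1 * X j + b1, e * X i + c1, ?_, ?_, ?_⟩
    · rw [hfp, hpd, hqc, hdd, hc1, ← hea, ← heb]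
      ring
    · -- degreeOf i (a1 * X j + b1) = 0
      have hia1 : degreeOf i a1 = 0 :=
        degreeOf_eq_zero_of_dvd i ⟨e, by rw [← hea]; ring⟩ ha hia
      have hib1 : degreeOf i b1 = 0 := by
        by_cases hb0 : b = 0
        · have : b1 = 0 := by
            rcases mul_eq_zero.mp (heb.trans hb0) with h | h
            · exact absurd h he
            · exact h
          simp [this]
        · exact degreeOf_eq_zero_of_dvd i ⟨e, by rw [← heb]; ring⟩ hb0 hib
      refine Nat.le_zero.mp ((degreeOf_add_le _ _ _).trans (max_le ?_ hib1.le))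
      exact le_trans (degreeOf_mul_le _ _ _) (by rw [hia1, hXji])
    · -- degreeOf j (e * X i + c1) = 0
      have hje : degreeOf j e = 0 :=
        degreeOf_eq_zero_of_dvd j ⟨a1, hea.symm⟩ ha hja
      have hjc1 : degreeOf j c1 = 0 := by
        by_cases hcc0 : cc = 0
        · have : c1 = 0 := by
            rcases mul_eq_zero.mp (hc1.symm.trans hcc0) with h | h
            · exact absurd h ha1
            · exact h
          simp [this]
        · exact degreeOf_eq_zero_of_dvd j ⟨a1, by rw [hc1]; ring⟩ hcc0 hjcc
      refine Nat.le_zero.mp ((degreeOf_add_le _ _ _).trans (max_le ?_ hjc1.le))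
      exact le_trans (degreeOf_mul_le _ _ _) (by rw [hje, hXij])
  · rintro ⟨g, h, hf, hgi, hhj⟩
    have hg' : pderiv i g = 0 := pderiv_eq_zero_of_degreeOf_eq_zero hgi
    have hh' : pderiv j h = 0 := pderiv_eq_zero_of_degreeOf_eq_zero hhj
    have hg'' : pderiv i (pderiv j g) = 0 := by
      refine pderiv_eq_zero_of_degreeOf_eq_zero ?_
      exact Nat.le_zero.mp ((degreeOf_pderiv_le hij g).trans hgi.le)
    simp only [rayleighDiff]
    rw [hf]
    rw [pderiv_mul, pderiv_mul, hg', hh', mul_zero, add_zero, zero_mul, zero_add,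
      pderiv_mul, hg'', zero_mul, zero_add]
    ring
end

section
/- Let A be an n×n matrix over a field F, let f = det(diag(x_1,…,x_n) + A) ∈ F[x_1,…,x_n], and let G = (diag(x_1,…,x_n) + A)^adj be the adjugate matrix (with polynomial entries). Then for every i ≠ j, Δ_ij(f) = G_ij · G_ji, where Δ_ij(f) = (∂f/∂x_i)(∂f/∂x_j) − f·(∂²f/∂x_i∂x_j). -/
/-!
Each variable `x_k` occurs in `M = diag(x) + A` only in the entry `(k, k)`, and linearly, so
`∂_k f` is the determinant of `M` with row `k` replaced by `e_k`, which is `G_kk`, and `∂_i ∂_j f`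
is the determinant `f_ij` of `M` with rows `i, j` replaced by `e_i, e_j`. The theorem is therefore
the Desnanot–Jacobi identity `G_ii G_jj - G_ij G_ji = f · f_ij`. Multiplying `M` on the left by
the identity matrix with rows `i, j` replaced by rows `i, j` of `G` gives `M` with those rows
replaced by `f e_i, f e_j`; comparing determinants yields the identity multiplied by `f`. The
factor cancels for the generic matrix, and the identity specializes from there to every matrix.
-/

open MvPolynomial

open Matrix

namespace Matrix

variable {R n : Type*} [CommRing R] [Fintype n] [DecidableEq n]

theorem det_updateRow_eq_sum_mul_adjugate (N : Matrix n n R) (i : n) (v : n → R) :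
    (N.updateRow i v).det = ∑ l, v l * N.adjugate l i := by
  rw [det_eq_sum_mul_adjugate_row _ i]
  refine Finset.sum_congr rfl fun l _ => ?_
  rw [updateRow_self, adjugate_apply, adjugate_apply, updateRow_idem]

theorem det_updateRow_updateRow_one {i j : n} (hij : i ≠ j) (r s : n → R) :
    (((1 : Matrix n n R).updateRow i r).updateRow j s).det = r i * s j - r j * s i := by
  -- a rank-two perturbation `1 + U * W` of the identity, and `det (1 + U * W) = det (1 + W * U)`
  let U : Matrix n (Fin 2) R := (of ![Pi.single i 1, Pi.single j 1])ᵀ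
  let W : Matrix (Fin 2) n R := of ![r - Pi.single i 1, s - Pi.single j 1]
  have hV : ((1 : Matrix n n R).updateRow i r).updateRow j s = 1 + U * W := by
    ext k l
    by_cases hkj : k = j <;> by_cases hki : k = i <;>
      simp_all [U, W, mul_apply, Fin.sum_univ_two, one_apply, Pi.single_apply, eq_comm]
  have hWU : 1 + W * U = !![r i, r j; s i, s j] := by
    ext a b
    fin_cases a <;> fin_cases b <;>
      simp [U, W, vecMul_transpose, dotProduct, Pi.single_apply, hij, hij.symm]
  rw [hV, det_one_add_mul_comm, hWU, det_fin_two_of]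

theorem adjugate_mul_adjugate_sub_of_isLeftRegular {N : Matrix n n R} (hN : IsLeftRegular N.det)
    {i j : n} (hij : i ≠ j) :
    N.adjugate i i * N.adjugate j j - N.adjugate i j * N.adjugate j i =
      N.det * ((N.updateRow j (Pi.single j 1)).updateRow i (Pi.single i 1)).det := by
  have hrow : ∀ k, N.adjugate k ᵥ* N = N.det • Pi.single k 1 := fun k => by
    ext l
    rw [← mul_apply_eq_vecMul, adjugate_mul, smul_apply, Pi.smul_apply, one_eq_pi_single]
  have hVN : ((1 : Matrix n n R).updateRow i (N.adjugate i)).updateRow j (N.adjugate j) * N =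
      (N.updateRow i (N.det • Pi.single i 1)).updateRow j (N.det • Pi.single j 1) := by
    rw [updateRow_mul, updateRow_mul, Matrix.one_mul, hrow, hrow]
  have hdet := congrArg det hVN
  rw [det_mul, det_updateRow_updateRow_one hij, det_updateRow_smul, updateRow_comm _ hij,
    det_updateRow_smul] at hdet
  apply hN
  linear_combination hdet

theorem adjugate_mul_adjugate_sub (N : Matrix n n R) {i j : n} (hij : i ≠ j) :
    N.adjugate i i * N.adjugate j j - N.adjugate i j * N.adjugate j i =
      N.det * ((N.updateRow j (Pi.single j 1)).updateRow i (Pi.single i 1)).det := by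
  let f : MvPolynomial (n × n) ℤ →+* R := (aeval fun p : n × n => N p.1 p.2).toRingHom
  have hN : (mvPolynomialX n n ℤ).map f = N := mvPolynomialX_mapMatrix_aeval ℤ N
  have hadj : ∀ a b, f ((mvPolynomialX n n ℤ).adjugate a b) = N.adjugate a b := fun a b => by
    rw [← hN, ← RingHom.mapMatrix_apply, ← RingHom.map_adjugate]
    rfl
  have hsingle : ∀ a : n, f ∘ Pi.single a 1 = Pi.single a 1 := fun a => by
    rw [← f.map_one]
    exact (Pi.single_op (fun _ => f) (fun _ => f.map_zero) a 1).symm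
  have hX := congrArg f <| adjugate_mul_adjugate_sub_of_isLeftRegular
    (fun _ _ => mul_left_cancel₀ (det_mvPolynomialX_ne_zero n ℤ)) hij
  simpa only [map_sub, map_mul, hadj, RingHom.map_det, RingHom.mapMatrix_apply, map_updateRow,
    hsingle, hN] using hX

end Matrix

namespace Derivation

variable {R A n : Type*} [CommSemiring R] [CommRing A] [Algebra R A] [DecidableEq n]
  (D : Derivation R A A)

theorem map_single_one_apply (l m : n) : D ((Pi.single l 1 : n → A) m) = 0 := by
  rw [Pi.single_apply]
  split_ifs
  exacts [D.map_one_eq_zero, D.map_zero]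

variable [Fintype n]

theorem map_det_eq_zero {N : Matrix n n A} (h : ∀ k l, D (N k l) = 0) : D N.det = 0 := by
  rw [det_apply, map_sum]
  refine Finset.sum_eq_zero fun σ _ => ?_
  have hprod : D (∏ k, N (σ k) k) = 0 :=
    Finset.prod_induction _ (fun x => D x = 0)
      (fun a b ha hb => by rw [leibniz, ha, hb, smul_zero, smul_zero, add_zero])
      D.map_one_eq_zero fun k _ => h _ _
  rw [Units.smul_def, map_zsmul, hprod, smul_zero]

theorem map_det_eq_det_updateRow {N : Matrix n n A} (i : n) (h : ∀ k ≠ i, ∀ l, D (N k l) = 0) :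
    D N.det = (N.updateRow i fun l => D (N i l)).det := by
  have hadj : ∀ l, D (N.adjugate l i) = 0 := fun l => by
    rw [adjugate_apply]
    refine D.map_det_eq_zero fun k m => ?_
    rcases eq_or_ne k i with rfl | hk
    · rw [updateRow_self, map_single_one_apply]
    · rw [updateRow_ne hk, h k hk]
  conv_lhs => rw [← updateRow_eq_self N i, det_updateRow_eq_sum_mul_adjugate]
  simp only [map_sum, leibniz, hadj, smul_eq_mul, mul_zero, zero_add,
    det_updateRow_eq_sum_mul_adjugate, mul_comm]

theorem map_det_eq_adjugate_self {N : Matrix n n A} (i : n) (h : ∀ k ≠ i, ∀ l, D (N k l) = 0)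
    (hi : (fun l => D (N i l)) = Pi.single i 1) : D N.det = N.adjugate i i := by
  rw [D.map_det_eq_det_updateRow i h, hi, adjugate_apply]

end Derivation

section DiagonalXAddC

variable {σ R : Type*} [DecidableEq σ] [CommRing R] (A : Matrix σ σ R)

theorem pderiv_diagonal_X_add_map_C_apply_of_ne {i k : σ} (hk : k ≠ i) (l : σ) :
    pderiv i ((diagonal X + A.map C : Matrix σ σ (MvPolynomial σ R)) k l) = 0 := by
  rcases eq_or_ne k l with rfl | hkl
  · simp [pderiv_X_of_ne hk]
  · simp [hkl]

theorem pderiv_diagonal_X_add_map_C_row (i : σ) :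
    (fun l => pderiv i ((diagonal X + A.map C : Matrix σ σ (MvPolynomial σ R)) i l)) =
      Pi.single i 1 := by
  ext l
  rcases eq_or_ne i l with rfl | hil
  · simp
  · simp [hil, Ne.symm hil]

variable [Fintype σ]

theorem pderiv_det_diagonal_X_add_map_C (i : σ) :
    pderiv i (diagonal X + A.map C : Matrix σ σ (MvPolynomial σ R)).det =
      (diagonal X + A.map C).adjugate i i :=
  Derivation.map_det_eq_adjugate_self (A := MvPolynomial σ R) (pderiv i) i
    (fun _ hk => pderiv_diagonal_X_add_map_C_apply_of_ne A hk) (pderiv_diagonal_X_add_map_C_row A i)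

theorem pderiv_pderiv_det_diagonal_X_add_map_C {i j : σ} (hij : i ≠ j) :
    pderiv i (pderiv j (diagonal X + A.map C : Matrix σ σ (MvPolynomial σ R)).det) =
      (((diagonal X + A.map C).updateRow j (Pi.single j 1)).updateRow i (Pi.single i 1)).det := by
  have hoff : ∀ k ≠ i, ∀ l,
      pderiv i (((diagonal X + A.map C).updateRow j (Pi.single j 1)) k l) = 0 := fun k hk l => by
    rcases eq_or_ne k j with rfl | hkj
    · rw [updateRow_self, Derivation.map_single_one_apply]
    · rw [updateRow_ne hkj, pderiv_diagonal_X_add_map_C_apply_of_ne A hk]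
  have hrow : (fun l => pderiv i (((diagonal X + A.map C).updateRow j (Pi.single j 1)) i l)) =
      Pi.single i 1 := by
    simp only [updateRow_ne hij, pderiv_diagonal_X_add_map_C_row]
  rw [pderiv_det_diagonal_X_add_map_C, adjugate_apply,
    Derivation.map_det_eq_adjugate_self (A := MvPolynomial σ R) (pderiv i) i hoff hrow,
    adjugate_apply]

end DiagonalXAddC

theorem rayleighDiff_det_eq_adjugate_mul {n : ℕ} {F : Type*} [Field F]
    (A : Matrix (Fin n) (Fin n) F) (i j : Fin n) (hij : i ≠ j) :
    let M : Matrix (Fin n) (Fin n) (MvPolynomial (Fin n) F) :=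
      Matrix.diagonal (fun k => X k) + A.map C
    rayleighDiff i j M.det = M.adjugate i j * M.adjugate j i := by
  intro M
  rw [rayleighDiff, pderiv_pderiv_det_diagonal_X_add_map_C A hij, pderiv_det_diagonal_X_add_map_C,
    pderiv_det_diagonal_X_add_map_C]
  linear_combination adjugate_mul_adjugate_sub M hij
end

section
/- Let A be an n×n irreducible matrix over a field F (i.e., A cannot be brought to block upper triangular form with at least two diagonal blocks by simultaneously permuting rows and columns). Let M = diag(x_1,…,x_n) + A over F[x_1,…,x_n] and let G = M^adj be its adjugate. Then every entry G_ij of G is a nonzero polynomial. -/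
/-!
Let `i = v₀ → v₁ → ⋯ → v_m = j` be a shortest path from `i` to `j` in the digraph of `A`;
it exists by irreducibility. As the path has no shortcuts, the principal submatrix of `A`
on the path is lower Hessenberg in the path order, so its `(i, j)` cofactor is
`±∏ A v_s v_{s+1} ≠ 0`. This cofactor is the coefficient of `∏_{k off the path} x_k` in the
`(i, j)` entry of the adjugate of `diag(x) + A`, which is therefore nonzero.
-/

open MvPolynomial

/-- A square matrix is irreducible if it cannot be brought, by a simultaneous
permutation of rows and columns, to a block upper triangular form with at least two
diagonal blocks; equivalently, there is no nonempty proper subset `X` of the index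
set such that the block `A[Xᶜ, X]` vanishes. -/
def Matrix.IsIrreducibleBlock {α : Type*} [Fintype α] [DecidableEq α] {R : Type*} [Zero R]
    (A : Matrix α α R) : Prop :=
  ¬∃ X : Finset α, X.Nonempty ∧ X ≠ Finset.univ ∧ ∀ i ∉ X, ∀ j ∈ X, A i j = 0

namespace Relation

variable {α : Type*} {r : α → α → Prop} {i j : α}

theorem ReflTransGen.exists_walk (h : ReflTransGen r i j) :
    ∃ m, ∃ v : ℕ → α, v 0 = i ∧ v m = j ∧ ∀ s < m, r (v s) (v (s + 1)) := by
  induction h using ReflTransGen.head_induction_on with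
  | refl => exact ⟨0, fun _ => j, rfl, rfl, by simp⟩
  | head hab _ ih =>
    obtain ⟨m, v, rfl, rfl, hv⟩ := ih
    refine ⟨m + 1, fun s => if s = 0 then _ else v (s - 1), rfl, by simp, fun s hs => ?_⟩
    rcases s with _ | s
    · simpa using hab
    · simpa using hv s (by omega)

/-- Cutting the `d` vertices strictly between `v a` and `v (a + d + 1)` out of a walk along an
edge `v a → v (a + d + 1)`. -/
theorem walk_splice {v : ℕ → α} {m a d : ℕ} (hv : ∀ s < m, r (v s) (v (s + 1)))
    (hm : a + d < m) (hr : r (v a) (v (a + d + 1))) :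
    ∀ s < m - d, r (if s ≤ a then v s else v (s + d))
      (if s + 1 ≤ a then v (s + 1) else v (s + 1 + d)) := by
  intro s hs
  rcases lt_trichotomy s a with h | rfl | h
  · simpa [h.le, Nat.succ_le_of_lt h] using hv s (by omega)
  · simpa [add_right_comm] using hr
  · rw [if_neg h.not_ge, if_neg (by omega), add_right_comm]
    exact hv (s + d) (by omega)

theorem ReflTransGen.exists_shortest_walk (h : ReflTransGen r i j) :
    ∃ m, ∃ w : Fin (m + 1) → α, Function.Injective w ∧ w 0 = i ∧ w (Fin.last m) = j ∧
      (∀ s : Fin m, r (w s.castSucc) (w s.succ)) ∧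
      ∀ s t : Fin (m + 1), (s : ℕ) + 1 < t → ¬ r (w s) (w t) := by
  classical
  have hex := h.exists_walk
  obtain ⟨v, rfl, hvm, hv⟩ := Nat.find_spec hex
  set m := Nat.find hex
  have no_shortcut : ∀ a c, a + 1 < c → c ≤ m → ¬ r (v a) (v c) := by
    intro a c hac hcm hr
    refine Nat.find_min hex (m := m - (c - a - 1)) (by omega) ⟨_, by simp, ?_,
      walk_splice hv (a := a) (d := c - a - 1) (by omega) (by convert hr using 2; omega)⟩
    simp only [if_neg (by omega : ¬ m - (c - a - 1) ≤ a)]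
    convert hvm using 2
    omega
  have no_early_arrival : ∀ a < m, v a ≠ j := fun a ha hj =>
    Nat.find_min hex ha ⟨v, rfl, hj, fun s hs => hv s (by omega)⟩
  have inj : ∀ a b, a < b → b ≤ m → v a ≠ v b := by
    intro a b hab hbm heq
    rcases hbm.lt_or_eq with hbm | rfl
    · exact no_shortcut a (b + 1) (by omega) hbm (heq ▸ hv b hbm)
    · exact no_early_arrival a hab (heq.trans hvm)
  refine ⟨m, fun t => v t, fun s t hst => ?_, rfl, hvm, fun s => hv s s.isLt,
    fun s t hst => no_shortcut s t hst (Nat.lt_succ_iff.mp t.isLt)⟩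
  by_contra hne
  rcases lt_or_gt_of_ne (Fin.val_ne_of_ne hne) with h | h
  · exact inj s t h (Nat.lt_succ_iff.mp t.isLt) hst
  · exact inj t s h (Nat.lt_succ_iff.mp s.isLt) hst.symm

end Relation

namespace Matrix

theorem IsIrreducibleBlock.reflTransGen {α R : Type*} [Fintype α] [DecidableEq α] [Zero R]
    {A : Matrix α α R} (hA : A.IsIrreducibleBlock) (i j : α) :
    Relation.ReflTransGen (fun a b => A a b ≠ 0) i j := by
  classical
  by_contra h
  set S := Finset.univ.filter fun a => Relation.ReflTransGen (fun a b => A a b ≠ 0) a j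
  refine hA ⟨S, ⟨j, by simp [S, Relation.ReflTransGen.refl]⟩, fun hS => h ?_,
    fun a ha b hb => ?_⟩
  · simpa [S] using Finset.eq_univ_iff_forall.mp hS i
  · simp only [S, Finset.mem_filter, Finset.mem_univ, true_and] at ha hb
    by_contra hab
    exact ha (hb.head hab)

theorem adjugate_zero_last_eq_prod {R : Type*} [CommRing R] {m : ℕ}
    (M : Matrix (Fin (m + 1)) (Fin (m + 1)) R)
    (hM : ∀ s t : Fin (m + 1), (s : ℕ) + 1 < t → M s t = 0) :
    M.adjugate 0 (Fin.last m) = (-1) ^ m * ∏ s : Fin m, M s.castSucc s.succ := by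
  rw [adjugate_fin_succ_eq_det_submatrix, det_of_isLowerTriangular]
  · simp [Fin.succAbove_last, Fin.succAbove_zero]
  · intro s t hst
    exact hM _ _ (by simpa using hst)

variable {K ι : Type*} [Field K] [Fintype ι] [DecidableEq ι]

theorem det_diagonal_X_add_map_C_ne_zero (p : ι → Prop) [DecidablePred p] (B : Matrix ι ι K)
    (hB : (B.toSquareBlockProp p).det ≠ 0) :
    (diagonal (fun k => if p k then 0 else (X k : MvPolynomial ι K)) + B.map C).det ≠ 0 := by
  set N := diagonal (fun k => if p k then 0 else (X k : MvPolynomial ι K)) + B.map C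
  -- Put `x_k = t⁻¹` and multiply the rows outside `p` by `t`: this gives a matrix `Q` over
  -- `K[t]` whose value at `t = 0` is block triangular with diagonal blocks `B_p` and `1`.
  set φ : MvPolynomial ι K →+* RatFunc K := eval₂Hom RatFunc.C fun _ => RatFunc.X⁻¹
  set Q : Matrix ι ι (Polynomial K) := diagonal (fun k => if p k then 0 else 1) +
    diagonal (fun k => if p k then 1 else Polynomial.X) * B.map Polynomial.C
  have hQ : diagonal (fun k => if p k then 1 else RatFunc.X) * φ.mapMatrix N =
      (algebraMap (Polynomial K) (RatFunc K)).mapMatrix Q := by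
    ext a b
    rcases eq_or_ne a b with rfl | hab
    · by_cases ha : p a <;>
        simp [N, Q, φ, ha, add_mul, inv_mul_cancel₀ (RatFunc.X_ne_zero (K := K)),
          RatFunc.algebraMap_C, mul_comm (RatFunc.X : RatFunc K)]
    · by_cases ha : p a <;>
        simp [N, Q, φ, ha, hab, RatFunc.algebraMap_C, mul_comm (RatFunc.X : RatFunc K)]
  set Q₀ := (Polynomial.evalRingHom 0).mapMatrix Q
  have hQ₀_apply : ∀ a b, Q₀ a b = if p a then B a b else (1 : Matrix ι ι K) a b := by
    intro a b
    rcases eq_or_ne a b with rfl | hab <;> by_cases ha : p a <;> simp [Q₀, Q, *]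
  have hQ₀ : Q₀.det = (B.toSquareBlockProp p).det := by
    rw [twoBlockTriangular_det _ p]
    · have hQ₀np : Q₀.toSquareBlockProp (¬p ·) = 1 := by
        ext a b
        simp [toSquareBlockProp_def, hQ₀_apply, a.2, one_apply, Subtype.ext_iff]
      rw [hQ₀np, det_one, mul_one]
      congr 1
      ext a b
      simp [toSquareBlockProp_def, hQ₀_apply, a.2]
    · intro a ha b hb
      simp [hQ₀_apply, ha, ne_of_apply_ne p (by simp [ha, hb] : p a ≠ p b)]
  have hQdet : Q.det ≠ 0 := fun h => hB (by rw [← hQ₀, ← RingHom.map_det, h, map_zero])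
  intro h
  apply hQdet
  apply RatFunc.algebraMap_injective K
  rw [RingHom.map_det, ← hQ, det_mul, ← RingHom.map_det, h, map_zero, mul_zero, map_zero]

theorem adjugate_diagonal_X_add_map_C_ne_zero {κ : Type*} [Fintype κ] [DecidableEq κ]
    (A : Matrix ι ι K) {w : κ → ι} (hw : Function.Injective w) {a b : κ}
    (h : (A.submatrix w w).adjugate a b ≠ 0) :
    (diagonal (fun k => (X k : MvPolynomial ι K)) + A.map C).adjugate (w a) (w b) ≠ 0 := by
  classical
  set p : ι → Prop := (· ∈ Set.range w)
  set B := A.updateRow (w b) (Pi.single (w a) 1)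
  have hB : (B.toSquareBlockProp p).det = (A.submatrix w w).adjugate a b := by
    rw [← det_submatrix_equiv_self (Equiv.ofInjective w hw), adjugate_apply]
    congr 1
    ext s t
    simp [B, toSquareBlockProp_def, updateRow_apply, hw.eq_iff, Pi.single_apply]
  set ψ : MvPolynomial ι K →+* MvPolynomial ι K := eval₂Hom C fun k => if p k then 0 else X k
  have hψ : ψ.mapMatrix ((diagonal (fun k => X k) + A.map C).updateRow (w b) (Pi.single (w a) 1))
      = diagonal (fun k => if p k then 0 else X k) + B.map C := by
    refine Matrix.ext fun s t => ?_
    rcases eq_or_ne s (w b) with rfl | hs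
    · simp [B, ψ, p, diagonal_apply, Pi.single_apply]
    · rcases eq_or_ne s t with rfl | hst
      · simp [B, ψ, hs]
      · simp [B, ψ, hs, hst]
  have hdet := det_diagonal_X_add_map_C_ne_zero p B (by convert hB ▸ h)
  rw [← hψ, ← RingHom.map_det] at hdet
  rw [adjugate_apply]
  exact fun h0 => hdet (by rw [h0, map_zero])

end Matrix

theorem adjugate_entries_ne_zero_of_irreducible_general {F : Type*} [Field F] {n : ℕ}
    (A : Matrix (Fin n) (Fin n) F) (hA : A.IsIrreducibleBlock) :
    ∀ i j : Fin n,
      (Matrix.diagonal (fun k => (X k : MvPolynomial (Fin n) F)) + A.map C).adjugate i j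
        ≠ 0 := by
  intro i j
  obtain ⟨m, w, hw, rfl, rfl, hedge, hshort⟩ := (hA.reflTransGen i j).exists_shortest_walk
  refine Matrix.adjugate_diagonal_X_add_map_C_ne_zero A hw ?_
  rw [Matrix.adjugate_zero_last_eq_prod (A.submatrix w w)
    fun s t hst => not_not.mp (hshort s t hst)]
  exact mul_ne_zero (pow_ne_zero _ (neg_ne_zero.mpr one_ne_zero))
    (Finset.prod_ne_zero_iff.mpr fun s _ => hedge s)

/-- If `A` is irreducible then every entry of the adjugate of `diag(x₁,…,xₙ) + A`
is a nonzero polynomial. -/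
theorem adjugate_entries_ne_zero_of_irreducible {F : Type*} [Field F] {n : ℕ}
    (hn : 1 ≤ n) (A : Matrix (Fin n) (Fin n) F) (hA : A.IsIrreducibleBlock) :
    ∀ i j : Fin n,
      (Matrix.diagonal (fun k => (X k : MvPolynomial (Fin n) F)) + A.map C).adjugate i j
        ≠ 0 :=
  adjugate_entries_ne_zero_of_irreducible_general A hA
end

section
/- Let A be an n×n irreducible matrix over a field F with n ≥ 4. Then every matrix B ∈ F^{n×n} with the same principal minors as A (A_S = B_S for all S ⊆ [n]) is irreducible. -/
/-- The principal minor of `A` indexed by the set `S` (equal to `1` when `S = ∅`). -/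
def principalMinor {F : Type*} [CommRing F] {n : ℕ}
    (A : Matrix (Fin n) (Fin n) F) (S : Finset (Fin n)) : F :=
  (A.submatrix (fun i : S => (i : Fin n)) (fun j : S => (j : Fin n))).det

/-!
If `B i j = 0` for `i ∉ X`, `j ∈ X`, every principal minor of `B`, hence of `A`, factors as
`A_S = A_{S ∩ X} * A_{S \ X}`. Read `A j i ≠ 0` as an arc `i → j`, so that the term of a
permutation `σ` in a principal minor is nonzero exactly when all arcs `i → σ i` are present.
By induction on length, no simple cycle of this digraph crosses between `X` and its complement.
For a crossing cycle `c` on the vertex set `S`, the factorization says that the permutations of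
`S` not preserving `X` contribute `0` to `A_S`. By induction only the Hamiltonian cycles of `S`
can contribute, all with the same sign, and the term of `c` is nonzero, so the digraph has a
second Hamiltonian cycle `ρ ≠ c` on `S`. An arc `x → y` of one of `c`, `ρ` that is not an arc
of the other closes up with the path from `y` to `x` along the other into a shorter cycle, whose
vertices therefore lie on one side. For a crossing arc `a → c a` of `c` this forces `ρ a = c a`;
following `c` from `c a` to the first vertex where `ρ` leaves `c` then gives an arc of `ρ` whose
shorter cycle contains both `a` and `c a`. Finally, irreducibility of `A` yields a crossing
cycle: an arc out of `X` closed up by a simple path back.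
-/

open Finset Equiv Equiv.Perm

namespace Equiv.Perm

variable {α : Type*} {r : α → α → Prop} {p : α → Prop} {τ ρ : Perm α} {x y : α}

theorem pow_apply_iff_of_forall_apply_iff (hp : ∀ z, p (τ z) ↔ p z) (x : α) :
    ∀ i : ℕ, p ((τ ^ i) x) ↔ p x
  | 0 => Iff.rfl
  | i + 1 => by rw [pow_succ', mul_apply, hp]; exact pow_apply_iff_of_forall_apply_iff hp x i

variable [Fintype α] [DecidableEq α]

theorem IsCycle.eq_of_pow_apply_eq (hτ : τ.IsCycle) (hx : x ∈ τ.support) {i j : ℕ}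
    (hi : i < #τ.support) (hj : j < #τ.support) (h : (τ ^ i) x = (τ ^ j) x) : i = j := by
  have hpow : τ ^ i = τ ^ j := hτ.pow_eq_pow_iff.mpr ⟨x, mem_support.mp hx, h⟩
  rwa [pow_inj_mod, hτ.orderOf, Nat.mod_eq_of_lt hi, Nat.mod_eq_of_lt hj] at hpow

theorem IsCycle.exists_pow_apply_eq (hτ : τ.IsCycle) (hx : x ∈ τ.support)
    (hy : y ∈ τ.support) : ∃ i < #τ.support, (τ ^ i) x = y := by
  have := (hτ.sameCycle (mem_support.mp hx) (mem_support.mp hy)).exists_pow_eq_of_mem_support hx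
  rwa [hτ.cycleOf_eq (mem_support.mp hx)] at this

theorem IsCycle.pow_card_support_apply (hτ : τ.IsCycle) (x : α) : (τ ^ #τ.support) x = x := by
  rw [← hτ.orderOf, pow_orderOf_eq_one, one_apply]

theorem IsCycle.iff_of_forall_apply_iff (hτ : τ.IsCycle)
    (hp : ∀ z, p (τ z) ↔ p z) (hx : x ∈ τ.support) (hy : y ∈ τ.support) : p y ↔ p x := by
  obtain ⟨i, -, rfl⟩ := hτ.exists_pow_apply_eq hx hy
  exact pow_apply_iff_of_forall_apply_iff hp x i

theorem IsCycle.pow_pred_card_support_apply_apply (hτ : τ.IsCycle) (hx : x ∈ τ.support) :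
    (τ ^ (#τ.support - 1)) (τ x) = x := by
  rw [← mul_apply, ← pow_succ, Nat.sub_add_cancel (card_pos.mpr ⟨x, hx⟩),
    hτ.pow_card_support_apply]

theorem IsCycle.exists_forward_skip (hτ : τ.IsCycle) (hsupp : ρ.support = τ.support)
    (hne : ρ ≠ τ) {a : α} (ha : a ∈ τ.support) (hρa : ρ a = τ a) :
    ∃ j t, j + 1 < t ∧ t < #τ.support ∧ ρ ((τ ^ j) (τ a)) = (τ ^ t) (τ a) := by
  have hb : τ a ∈ τ.support := apply_mem_support.mpr ha
  have hlast := hτ.pow_pred_card_support_apply_apply ha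
  have hex : ∃ j, j < #τ.support ∧ ρ ((τ ^ j) (τ a)) ≠ τ ((τ ^ j) (τ a)) := by
    obtain ⟨z, hz⟩ := not_forall.mp fun h => hne (Equiv.ext h)
    have hzS : z ∈ τ.support := by
      by_contra hzS
      exact hz (by rw [notMem_support.mp hzS, notMem_support.mp (hsupp ▸ hzS)])
    obtain ⟨j, hj, rfl⟩ := hτ.exists_pow_apply_eq hb hzS
    exact ⟨j, hj, hz⟩
  obtain ⟨hjm, hj⟩ := Nat.find_spec hex
  set j := Nat.find hex
  have hmin : ∀ i < j, ρ ((τ ^ i) (τ a)) = (τ ^ (i + 1)) (τ a) := fun i hi => by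
    rw [pow_succ', mul_apply]
    by_contra h
    exact Nat.find_min hex hi ⟨by omega, h⟩
  have hjlast : j ≠ #τ.support - 1 := fun h => hj (by rw [h, hlast, hρa])
  obtain ⟨t, htm, ht⟩ := hτ.exists_pow_apply_eq hb
    (hsupp ▸ apply_mem_support.mpr (hsupp ▸ pow_apply_mem_support.mpr hb))
  refine ⟨j, t, ?_, htm, ht.symm⟩
  rcases Nat.lt_or_ge (j + 1) t with h | h
  · exact h
  exfalso
  rcases t with _ | s
  · apply hjlast
    refine hτ.eq_of_pow_apply_eq hb hjm (by omega) (ρ.injective ?_)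
    rw [← ht, hlast, hρa, pow_zero, one_apply]
  · rcases Nat.lt_or_ge s j with hs | hs
    · have := hτ.eq_of_pow_apply_eq hb hjm (by omega) (ρ.injective (ht.symm.trans (hmin s hs).symm))
      omega
    · exact hj (by rw [← ht, show s = j by omega, pow_succ', mul_apply])

def IsCycleIn (r : α → α → Prop) (τ : Perm α) : Prop :=
  τ.IsCycle ∧ ∀ x ∈ τ.support, r x (τ x)

theorem isCycleIn_ofSubtype {q : α → Prop} [DecidablePred q] {σ : Perm (Subtype q)}
    (hσ : σ.IsCycle) (hr : ∀ i, σ i ≠ i → r i (σ i)) : (ofSubtype σ).IsCycleIn r := by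
  refine ⟨hσ.extendDomain (Equiv.refl _), fun x hx => ?_⟩
  by_cases hxq : q x
  · rw [ofSubtype_apply_of_mem _ hxq]
    exact hr _ fun h => mem_support.mp hx (by rw [ofSubtype_apply_of_mem _ hxq, h])
  · exact absurd (ofSubtype_apply_of_not_mem σ hxq) (mem_support.mp hx)

end Equiv.Perm

theorem List.isCycleIn_formPerm {α : Type*} [Fintype α] [DecidableEq α] {r : α → α → Prop}
    {l : List α} (hl : l.Nodup) (hlen : 2 ≤ l.length) (hchain : l.IsChain r)
    (hwrap : r (l.getLast (ne_nil_of_length_pos (by omega)))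
      (l.head (ne_nil_of_length_pos (by omega)))) :
    l.formPerm.IsCycleIn r := by
  refine ⟨isCycle_formPerm hl hlen, fun x hx => ?_⟩
  obtain ⟨i, hi, rfl⟩ := List.mem_iff_getElem.mp (mem_of_formPerm_apply_ne (mem_support.mp hx))
  rw [formPerm_apply_getElem _ hl]
  by_cases hlast : i + 1 < l.length
  · simp only [Nat.mod_eq_of_lt hlast]
    exact List.isChain_iff_getElem.mp hchain i hlast
  · have hi' : i + 1 = l.length := by omega
    simp only [hi', Nat.mod_self]
    convert hwrap using 1
    · rw [List.getLast_eq_getElem]; congr 1; omega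
    · rw [List.head_eq_getElem]

theorem Relation.ReflTransGen.exists_nodup_isChain {α : Type*} {r : α → α → Prop} {x y : α}
    (h : Relation.ReflTransGen r x y) :
    ∃ (l : List α) (hl : l ≠ []), l.Nodup ∧ l.IsChain r ∧ l.head hl = x ∧ l.getLast hl = y := by
  induction h using Relation.ReflTransGen.head_induction_on with
  | refl => exact ⟨[y], List.cons_ne_nil _ _, List.nodup_singleton _, List.IsChain.singleton _,
      rfl, rfl⟩
  | @head x z hxz _ ih =>
    obtain ⟨l, hl, hnd, hch, rfl, rfl⟩ := ih
    by_cases hx : x ∈ l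
    · obtain ⟨u, v, rfl⟩ := List.append_of_mem hx
      refine ⟨x :: v, List.cons_ne_nil _ _, hnd.sublist (List.sublist_append_right _ _),
        hch.right_of_append, rfl, ?_⟩
      rw [List.getLast_append_of_ne_nil]
    · refine ⟨x :: l, List.cons_ne_nil _ _, List.nodup_cons.mpr ⟨hx, hnd⟩, ?_, rfl,
        List.getLast_cons hl⟩
      obtain ⟨a, t, rfl⟩ := List.exists_cons_of_ne_nil hl
      exact List.IsChain.cons_cons hxz hch

namespace Equiv.Perm

variable {α : Type*} [Fintype α] [DecidableEq α] {r : α → α → Prop} {p : α → Prop}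
  {τ ρ : Perm α}

theorem exists_isCycleIn_not_forall_iff {x y : α} (hxy : r x y)
    (hyx : Relation.ReflTransGen r y x) (hx : p x) (hy : ¬p y) :
    ∃ τ : Perm α, τ.IsCycleIn r ∧ ¬∀ z, p (τ z) ↔ p z := by
  obtain ⟨l, hl, hnd, hch, hhead, hlast⟩ := hyx.exists_nodup_isChain
  obtain ⟨a, b, t, rfl⟩ : ∃ a b t, l = a :: b :: t := by
    match l, hl with
    | [a], _ => exact absurd (hhead.symm.trans hlast ▸ hx) hy
    | a :: b :: t, _ => exact ⟨a, b, t, rfl⟩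
  refine ⟨_, List.isCycleIn_formPerm hnd (by simp) hch (by rwa [hhead, hlast]), fun h => hy ?_⟩
  have hτx := h x
  rw [← hlast, List.formPerm_apply_getLast, hlast] at hτx
  exact (show a = y from hhead) ▸ hτx.mpr hx

theorem IsCycleIn.pow_apply_iff_of_chord (hτ : τ.IsCycleIn r)
    (H : ∀ π : Perm α, π.IsCycleIn r → #π.support < #τ.support → ∀ z, p (π z) ↔ p z)
    {x y : α} {k : ℕ} (hy : y ∈ τ.support) (hk : (τ ^ k) y = x) (hkm : k + 1 < #τ.support)
    (hxy : r x y) : ∀ i ≤ k, p ((τ ^ i) y) ↔ p x := by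
  intro i hi
  rcases Nat.eq_zero_or_pos k with rfl | hk0
  · obtain rfl : i = 0 := by omega
    rw [hk]
  set L := (List.range (k + 1)).map (fun i => (τ ^ i) y)
  have hlen : L.length = k + 1 := by simp [L]
  have hnd : L.Nodup := List.Nodup.map_on (fun i hi j hj h =>
    hτ.1.eq_of_pow_apply_eq hy (by simp at hi; omega) (by simp at hj; omega) h) List.nodup_range
  have hchain : L.IsChain r := by
    rw [List.isChain_map, List.isChain_range_succ]
    intro j _
    rw [pow_succ', mul_apply]
    exact hτ.2 _ (pow_apply_mem_support.mpr hy)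
  have hwrap : r (L.getLast (List.ne_nil_of_length_pos (by omega)))
      (L.head (List.ne_nil_of_length_pos (by omega))) := by
    simpa [L, hk] using hxy
  have hπ := List.isCycleIn_formPerm hnd (by omega) hchain hwrap
  have hsupp : L.formPerm.support = L.toFinset :=
    List.support_formPerm_of_nodup _ hnd fun z h => by simp [h] at hlen; omega
  have hmem : ∀ j ≤ k, (τ ^ j) y ∈ L.formPerm.support := fun j hj => by
    rw [hsupp, List.mem_toFinset]
    exact List.mem_map.mpr ⟨j, List.mem_range.mpr (by omega), rfl⟩
  have hπp := H _ hπ (by rw [hsupp, List.toFinset_card_of_nodup hnd]; omega)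
  rw [← hk]
  exact hπ.1.iff_of_forall_apply_iff hπp (hmem k le_rfl) (hmem i hi)

theorem IsCycleIn.apply_eq_of_not_iff (hτ : τ.IsCycleIn r) (hρ : ρ.IsCycleIn r)
    (hsupp : ρ.support = τ.support)
    (H : ∀ π : Perm α, π.IsCycleIn r → #π.support < #τ.support → ∀ z, p (π z) ↔ p z)
    {a : α} (ha : ¬(p (τ a) ↔ p a)) : ρ a = τ a := by
  have haS : a ∈ τ.support := mem_support.mpr fun h => ha (by rw [h])
  have hb : τ a ∈ ρ.support := hsupp ▸ apply_mem_support.mpr haS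
  by_contra hρa
  obtain ⟨k, hkm, hk⟩ := hρ.1.exists_pow_apply_eq hb (hsupp ▸ haS)
  have hk1 : k + 1 < #ρ.support := by
    by_contra hk1
    have hcycle := hρ.1.pow_card_support_apply (τ a)
    rw [← show k + 1 = #ρ.support by omega, pow_succ', mul_apply, hk] at hcycle
    exact hρa hcycle
  exact ha (hρ.pow_apply_iff_of_chord (fun π hπ hlt => H π hπ (hsupp ▸ hlt)) hb hk hk1
    (hτ.2 a haS) 0 (Nat.zero_le _))

theorem IsCycleIn.forall_apply_iff_of_ne (hτ : τ.IsCycleIn r) (hρ : ρ.IsCycleIn r)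
    (hsupp : ρ.support = τ.support) (hne : ρ ≠ τ)
    (H : ∀ π : Perm α, π.IsCycleIn r → #π.support < #τ.support → ∀ z, p (π z) ↔ p z) :
    ∀ z, p (τ z) ↔ p z := by
  by_contra hcross
  obtain ⟨a, ha⟩ := not_forall.mp hcross
  have haS : a ∈ τ.support := mem_support.mpr fun h => ha (by rw [h])
  have hb : τ a ∈ τ.support := apply_mem_support.mpr haS
  obtain ⟨j, t, hjt, htm, hskip⟩ := hτ.1.exists_forward_skip hsupp hne haS
    (hτ.apply_eq_of_not_iff hρ hsupp H ha)
  have hpow : ∀ i l, (τ ^ i) ((τ ^ l) (τ a)) = (τ ^ (i + l)) (τ a) := fun i l => by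
    rw [pow_add, mul_apply]
  have hback : (τ ^ (j + #τ.support - t)) ((τ ^ t) (τ a)) = (τ ^ j) (τ a) := by
    rw [hpow, show j + #τ.support - t + t = #τ.support + j by omega, pow_add, mul_apply,
      hτ.1.pow_card_support_apply]
  have harc := hτ.pow_apply_iff_of_chord H (pow_apply_mem_support.mpr hb) hback (by omega)
    (hskip ▸ hρ.2 _ (hsupp ▸ pow_apply_mem_support.mpr hb))
  have hside_a := harc (#τ.support - 1 - t) (by omega)
  have hside_b := harc (#τ.support - t) (by omega)
  rw [hpow, show #τ.support - 1 - t + t = #τ.support - 1 by omega,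
    hτ.1.pow_pred_card_support_apply_apply haS] at hside_a
  rw [hpow, show #τ.support - t + t = #τ.support by omega, hτ.1.pow_card_support_apply] at hside_b
  exact ha (hside_b.trans hside_a.symm)

end Equiv.Perm

section PrincipalMinor

open Matrix

variable {R : Type*} [CommRing R]

theorem Matrix.det_toSquareBlockProp_mul_det_toSquareBlockProp_not {κ : Type*} [Fintype κ]
    [DecidableEq κ] (M : Matrix κ κ R) (q : κ → Prop) [DecidablePred q] :
    (M.toSquareBlockProp q).det * (M.toSquareBlockProp fun i => ¬q i).det =
      ∑ σ ∈ univ.filter (fun σ : Perm κ => ∀ i, q (σ i) ↔ q i), sign σ • ∏ i, M (σ i) i := by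
  let M' : Matrix κ κ R := fun i j => if (q i ↔ q j) then M i j else 0
  have hblock₁ : M'.toSquareBlockProp q = M.toSquareBlockProp q := by
    ext i j; exact if_pos (iff_of_true i.2 j.2)
  have hblock₂ : (M'.toSquareBlockProp fun i => ¬q i) = M.toSquareBlockProp fun i => ¬q i := by
    ext i j; exact if_pos (iff_of_false i.2 j.2)
  rw [← hblock₁, ← hblock₂,
    ← M'.twoBlockTriangular_det q (fun i hi j hj => if_neg fun h => hi (h.mpr hj)),
    det_apply, sum_filter]
  refine sum_congr rfl fun σ _ => ?_
  split_ifs with hσ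
  · exact congrArg _ (prod_congr rfl fun i _ => if_pos (hσ i))
  · obtain ⟨i, hi⟩ := not_forall.mp hσ
    rw [prod_eq_zero (mem_univ i) (if_neg hi), smul_zero]

theorem isCycle_of_prod_ne_zero {ι : Type*} [Fintype ι] [DecidableEq ι] {A : Matrix ι ι R}
    {X S : Finset ι}
    (H : ∀ π : Perm ι, π.IsCycleIn (fun i j => A j i ≠ 0) → #π.support < #S →
      ∀ z, π z ∈ X ↔ z ∈ X)
    {σ : Perm S} (hcross : ¬∀ i, ((σ i : ι) ∈ X ↔ (i : ι) ∈ X))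
    (hσ : ∏ i, A (σ i) i ≠ 0) : σ.IsCycle ∧ σ.support = univ := by
  obtain ⟨i₀, hi₀⟩ := not_forall.mp hcross
  have hτ : (σ.cycleOf i₀).IsCycle := isCycle_cycleOf σ fun h => hi₀ (by rw [h])
  have hτσ : ∀ i ∈ (σ.cycleOf i₀).support, σ.cycleOf i₀ i = σ i := fun i hi =>
    (mem_support_cycleOf_iff.mp hi).1.cycleOf_apply
  have hπ := isCycleIn_ofSubtype (r := fun i j => A j i ≠ 0) hτ fun i hi h => by
    rw [hτσ i (mem_support.mpr hi)] at h
    exact hσ (prod_eq_zero (mem_univ i) h)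
  have hfull : (σ.cycleOf i₀).support = univ := by
    by_contra hne
    have hlt : #(ofSubtype (σ.cycleOf i₀)).support < #S := by
      rw [support_ofSubtype, card_map, ← card_attach (s := S), ← univ_eq_attach]
      -- `support_ofSubtype` uses another (equal) `Fintype` instance on the subtype
      convert card_lt_card (ssubset_univ_iff.mpr hne)
    have := H _ hπ hlt i₀
    rw [ofSubtype_apply_coe, cycleOf_apply_self] at this
    exact hi₀ this
  have hστ : σ.cycleOf i₀ = σ := Equiv.ext fun i => hτσ i (hfull ▸ mem_univ i)
  exact ⟨hστ ▸ hτ, hστ ▸ hfull⟩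

variable {n : ℕ}

theorem det_toSquareBlockProp_submatrix_eq_principalMinor (A : Matrix (Fin n) (Fin n) R)
    {S T : Finset (Fin n)} (q : S → Prop) [DecidablePred q]
    (hq : ∀ v, (∃ h : v ∈ S, q ⟨v, h⟩) ↔ v ∈ T) :
    ((A.submatrix ((↑) : S → Fin n) (↑)).toSquareBlockProp q).det = principalMinor A T := by
  rw [principalMinor, ← det_submatrix_equiv_self
    ((subtypeSubtypeEquivSubtypeExists _ q).trans (subtypeEquivRight hq))]
  rfl

theorem principalMinor_eq_mul_of_forall_eq_zero (M : Matrix (Fin n) (Fin n) R)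
    {X : Finset (Fin n)} (h : ∀ i ∉ X, ∀ j ∈ X, M i j = 0) (S : Finset (Fin n)) :
    principalMinor M S = principalMinor M (S ∩ X) * principalMinor M (S \ X) := by
  rw [← det_toSquareBlockProp_submatrix_eq_principalMinor M (T := S ∩ X)
      (fun i : S => (i : Fin n) ∈ X) fun v => by simp [and_comm],
    ← det_toSquareBlockProp_submatrix_eq_principalMinor M (T := S \ X)
      (fun i : S => (i : Fin n) ∉ X) fun v => by simp [and_comm]]
  exact twoBlockTriangular_det _ _ fun i hi j hj => h _ hi _ hj

theorem sum_sign_smul_prod_not_forall_iff_eq_zero (A : Matrix (Fin n) (Fin n) R)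
    {X S : Finset (Fin n)}
    (hS : principalMinor A S = principalMinor A (S ∩ X) * principalMinor A (S \ X)) :
    ∑ σ ∈ univ.filter (fun σ : Perm S => ¬∀ i, ((σ i : Fin n) ∈ X ↔ (i : Fin n) ∈ X)),
      sign σ • ∏ i, A (σ i) i = 0 := by
  have hblock := det_toSquareBlockProp_mul_det_toSquareBlockProp_not
    (A.submatrix ((↑) : S → Fin n) (↑)) fun i : S => (i : Fin n) ∈ X
  rw [det_toSquareBlockProp_submatrix_eq_principalMinor A (T := S ∩ X) _
      fun v => by simp [and_comm],
    det_toSquareBlockProp_submatrix_eq_principalMinor A (T := S \ X) _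
      fun v => by simp [and_comm],
    ← hS, principalMinor, det_apply, ← sum_filter_add_sum_filter_not univ
      fun σ : Perm S => ∀ i, ((σ i : Fin n) ∈ X ↔ (i : Fin n) ∈ X)] at hblock
  exact left_eq_add.mp hblock.symm

variable {A : Matrix (Fin n) (Fin n) R} {X S : Finset (Fin n)}

open Classical in
theorem sum_prod_of_isCycle_eq_zero
    (hS : principalMinor A S = principalMinor A (S ∩ X) * principalMinor A (S \ X))
    (H : ∀ π : Perm (Fin n), π.IsCycleIn (fun i j => A j i ≠ 0) → #π.support < #S →
      ∀ z, π z ∈ X ↔ z ∈ X)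
    (hX : ∃ x ∈ S, ∃ y ∈ S, ¬(x ∈ X ↔ y ∈ X)) :
    ∑ σ ∈ univ.filter (fun σ : Perm S => σ.IsCycle ∧ σ.support = univ), ∏ i, A (σ i) i = 0 := by
  have hcross : ∀ σ : Perm S, σ.IsCycle ∧ σ.support = univ →
      ¬∀ i, ((σ i : Fin n) ∈ X ↔ (i : Fin n) ∈ X) := by
    rintro σ ⟨hσ, hsupp⟩ hpres
    obtain ⟨x, hx, y, hy, hxy⟩ := hX
    exact hxy (hσ.iff_of_forall_apply_iff (p := fun i : S => (i : Fin n) ∈ X) hpres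
      (hsupp ▸ mem_univ (⟨y, hy⟩ : S)) (hsupp ▸ mem_univ (⟨x, hx⟩ : S)))
  have hsub : univ.filter (fun σ : Perm S => σ.IsCycle ∧ σ.support = univ) ⊆
      univ.filter fun σ : Perm S => ¬∀ i, ((σ i : Fin n) ∈ X ↔ (i : Fin n) ∈ X) :=
    fun σ hσ => mem_filter.mpr ⟨mem_univ σ, hcross σ (mem_filter.mp hσ).2⟩
  have hsum := sum_sign_smul_prod_not_forall_iff_eq_zero A hS
  rw [← sum_subset hsub fun σ hσ hfull => ?_] at hsum
  · rw [sum_congr rfl fun σ hσ => by rw [(mem_filter.mp hσ).2.1.sign, (mem_filter.mp hσ).2.2],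
      ← smul_sum, smul_eq_zero_iff_eq] at hsum
    exact hsum
  · by_contra hne
    refine hfull (mem_filter.mpr ⟨mem_univ σ, isCycle_of_prod_ne_zero H (mem_filter.mp hσ).2 ?_⟩)
    exact fun h => hne (by rw [h, smul_zero])

theorem exists_isCycleIn_ne [IsDomain R] {c : Perm (Fin n)}
    (hS : principalMinor A c.support =
      principalMinor A (c.support ∩ X) * principalMinor A (c.support \ X))
    (H : ∀ π : Perm (Fin n), π.IsCycleIn (fun i j => A j i ≠ 0) → #π.support < #c.support →
      ∀ z, π z ∈ X ↔ z ∈ X)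
    (hc : c.IsCycleIn fun i j => A j i ≠ 0) (hcross : ¬∀ z, c z ∈ X ↔ z ∈ X) :
    ∃ ρ : Perm (Fin n), ρ.IsCycleIn (fun i j => A j i ≠ 0) ∧ ρ.support = c.support ∧ ρ ≠ c := by
  classical
  obtain ⟨x, hx⟩ := not_forall.mp hcross
  have hxS : x ∈ c.support := mem_support.mpr fun h => hx (by rw [h])
  let c' : Perm c.support := c.subtypePerm fun _ => apply_mem_support
  have hc' : ∏ i, A (c' i) i ≠ 0 := prod_ne_zero_iff.mpr fun i _ => hc.2 i i.2
  have hc'full := isCycle_of_prod_ne_zero H (fun h => hx (h ⟨x, hxS⟩)) hc'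
  obtain ⟨ρ, hρ, hρc', hρ0⟩ : ∃ ρ ∈ univ.filter (fun σ : Perm c.support =>
      σ.IsCycle ∧ σ.support = univ), ρ ≠ c' ∧ ∏ i, A (ρ i) i ≠ 0 := by
    by_contra! h
    refine hc' ((sum_eq_single_of_mem c' (mem_filter.mpr ⟨mem_univ _, hc'full⟩) h).symm.trans ?_)
    exact sum_prod_of_isCycle_eq_zero hS H
      ⟨x, hxS, c x, apply_mem_support.mpr hxS, fun h => hx h.symm⟩
  obtain ⟨hρcyc, hρsupp⟩ := (mem_filter.mp hρ).2
  refine ⟨ofSubtype ρ, isCycleIn_ofSubtype hρcyc fun i _ h => hρ0 (prod_eq_zero (mem_univ i) h),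
    ?_, fun h => hρc' (ofSubtype_injective ?_)⟩
  · rw [support_ofSubtype]
    convert attach_map_val (s := c.support)
    rw [← univ_eq_attach]
    convert hρsupp
  · rw [h, ofSubtype_subtypePerm _ fun _ => mem_support.mpr]

theorem forall_apply_mem_iff_of_isCycleIn [IsDomain R]
    (hA : ∀ S, principalMinor A S = principalMinor A (S ∩ X) * principalMinor A (S \ X))
    (c : Perm (Fin n)) (hc : c.IsCycleIn fun i j => A j i ≠ 0) : ∀ z, c z ∈ X ↔ z ∈ X := by
  induction hm : #c.support using Nat.strong_induction_on generalizing c with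
  | _ m IH =>
    have H : ∀ π : Perm (Fin n), π.IsCycleIn (fun i j => A j i ≠ 0) → #π.support < #c.support →
        ∀ z, π z ∈ X ↔ z ∈ X := fun π hπ hlt => IH _ (hm ▸ hlt) π hπ rfl
    by_contra hcross
    obtain ⟨ρ, hρ, hsupp, hne⟩ := exists_isCycleIn_ne (hA _) H hc hcross
    exact hcross (hc.forall_apply_iff_of_ne hρ hsupp hne H)

end PrincipalMinor

theorem Matrix.IsIrreducibleBlock.reflTransGen_s14 {ι R : Type*} [Fintype ι] [DecidableEq ι]
    [Zero R] {A : Matrix ι ι R} (hA : A.IsIrreducibleBlock) (u v : ι) :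
    Relation.ReflTransGen (fun i j => A j i ≠ 0) u v := by
  classical
  by_contra huv
  refine hA ⟨univ.filter (Relation.ReflTransGen (fun i j => A j i ≠ 0) u),
    ⟨u, mem_filter.mpr ⟨mem_univ u, .refl⟩⟩, fun h => huv (mem_filter.mp (h ▸ mem_univ v)).2,
    fun i hi j hj => ?_⟩
  by_contra hij
  exact hi (mem_filter.mpr ⟨mem_univ i, (mem_filter.mp hj).2.tail hij⟩)

theorem isIrreducible_of_samePrincipalMinors_general {F : Type*} [Field F] {n : ℕ}
    (A B : Matrix (Fin n) (Fin n) F) (hA : A.IsIrreducibleBlock)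
    (hAB : ∀ S : Finset (Fin n), principalMinor A S = principalMinor B S) :
    B.IsIrreducibleBlock := by
  rintro ⟨X, hXne, hXuniv, hBX⟩
  have hAX : ∀ S, principalMinor A S = principalMinor A (S ∩ X) * principalMinor A (S \ X) :=
    fun S => by simpa only [hAB] using principalMinor_eq_mul_of_forall_eq_zero B hBX S
  obtain ⟨i, hi, j, hj, hij⟩ : ∃ i ∉ X, ∃ j ∈ X, A i j ≠ 0 := by
    by_contra! h
    exact hA ⟨X, hXne, hXuniv, h⟩
  obtain ⟨c, hc, hcross⟩ := exists_isCycleIn_not_forall_iff (p := (· ∈ X)) hij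
    (hA.reflTransGen_s14 i j) hj hi
  exact hcross (forall_apply_mem_iff_of_isCycleIn hAX c hc)

/-- Any matrix with the same principal minors as an irreducible matrix is itself
irreducible. -/
theorem isIrreducible_of_samePrincipalMinors {F : Type*} [Field F] {n : ℕ}
    (hn : 4 ≤ n) (A B : Matrix (Fin n) (Fin n) F) (hA : A.IsIrreducibleBlock)
    (hAB : ∀ S : Finset (Fin n), principalMinor A S = principalMinor B S) :
    B.IsIrreducibleBlock :=
  isIrreducible_of_samePrincipalMinors_general A B hA hAB
end

section
/- Let A be an n×n symmetric reducible matrix over a field F with n ≥ 4. Then there exists a matrix B ∈ F^{n×n} with the same principal minors as A such that B is not diagonally equivalent to A (i.e., B ≠ DAD^{-1} and B ≠ DA^T D^{-1} for every invertible diagonal matrix D). -/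
/-- A square matrix is irreducible if it cannot be brought, by a simultaneous
permutation of rows and columns, to a block upper triangular form with at least two
diagonal blocks. -/
def Matrix.IsIrreducible' {α : Type*} [Fintype α] [DecidableEq α] {R : Type*} [Zero R]
    (A : Matrix α α R) : Prop :=
  ¬∃ X : Finset α, X.Nonempty ∧ X ≠ Finset.univ ∧ ∀ i ∉ X, ∀ j ∈ X, A i j = 0

open Matrix

theorem Matrix.det_eq_of_twoBlockTriangular {m R : Type*} [Fintype m] [DecidableEq m]
    [CommRing R] {M N : Matrix m m R} (p : m → Prop) [DecidablePred p]
    (hM : ∀ i, ¬p i → ∀ j, p j → M i j = 0) (hMN : ∀ i j, (p i → p j) → M i j = N i j) :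
    M.det = N.det := by
  have hN : ∀ i, ¬p i → ∀ j, p j → N i j = 0 := fun i hi j hj =>
    (hMN i j (absurd · hi)).symm.trans (hM i hi j hj)
  rw [twoBlockTriangular_det M p hM, twoBlockTriangular_det N p hN]
  congr 2 <;> ext i j
  · exact hMN i j fun _ => j.2
  · exact hMN i j fun h => absurd h i.2

theorem principalMinor_add_single {R : Type*} [CommRing R] {n : ℕ}
    {A : Matrix (Fin n) (Fin n) R} {X : Finset (Fin n)} (hX : ∀ i ∉ X, ∀ j ∈ X, A i j = 0)
    {i₀ j₀ : Fin n} (hi₀ : i₀ ∈ X) (hj₀ : j₀ ∉ X) (c : R) (S : Finset (Fin n)) :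
    principalMinor (A + single i₀ j₀ c) S = principalMinor A S := by
  refine (det_eq_of_twoBlockTriangular (fun i : S => (i : Fin n) ∈ X)
    (fun i hi j hj => hX _ hi _ hj) fun i j hij => ?_).symm
  have hne : ¬(i₀ = i ∧ j₀ = j) := by
    rintro ⟨rfl, rfl⟩
    exact hj₀ (hij hi₀)
  simp [single_apply_of_ne _ _ _ _ _ hne]

theorem exists_not_diagEquiv_of_symm_reducible_general {F : Type*} [Field F] {n : ℕ}
    (A : Matrix (Fin n) (Fin n) F)
    (hsymm : A.transpose = A) (hA : ¬A.IsIrreducible') :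
    ∃ B : Matrix (Fin n) (Fin n) F,
      (∀ S : Finset (Fin n), principalMinor A S = principalMinor B S) ∧
      ∀ d : Fin n → F, (∀ i, d i ≠ 0) →
        B ≠ Matrix.diagonal d * A * Matrix.diagonal (fun i => (d i)⁻¹) ∧
        B ≠ Matrix.diagonal d * A.transpose * Matrix.diagonal fun i => (d i)⁻¹ := by
  obtain ⟨X, ⟨i₀, hi₀⟩, hXuniv, hX⟩ := not_not.mp hA
  obtain ⟨j₀, hj₀⟩ := not_forall.mp (mt Finset.eq_univ_iff_forall.mpr hXuniv)
  have hA0 : A i₀ j₀ = 0 := by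
    rw [← hsymm]
    exact hX j₀ hj₀ i₀ hi₀
  refine ⟨A + single i₀ j₀ 1, fun S => (principalMinor_add_single hX hi₀ hj₀ 1 S).symm,
    fun d _ => ?_⟩
  have hentry : (A + single i₀ j₀ 1 : Matrix (Fin n) (Fin n) F) i₀ j₀ ≠
      (diagonal d * A * diagonal fun i => (d i)⁻¹) i₀ j₀ := by
    simp [mul_diagonal, diagonal_mul, hA0]
  rw [hsymm]
  exact ⟨fun h => hentry (congrFun₂ h i₀ j₀), fun h => hentry (congrFun₂ h i₀ j₀)⟩

/-- For any reducible symmetric matrix `A` (with `n ≥ 4`) there is a matrix with the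
same principal minors as `A` that is not diagonally equivalent to `A`. -/
theorem exists_not_diagEquiv_of_symm_reducible {F : Type*} [Field F] {n : ℕ}
    (hn : 4 ≤ n) (A : Matrix (Fin n) (Fin n) F)
    (hsymm : A.transpose = A) (hA : ¬A.IsIrreducible') :
    ∃ B : Matrix (Fin n) (Fin n) F,
      (∀ S : Finset (Fin n), principalMinor A S = principalMinor B S) ∧
      ∀ d : Fin n → F, (∀ i, d i ≠ 0) →
        B ≠ Matrix.diagonal d * A * Matrix.diagonal (fun i => (d i)⁻¹) ∧
        B ≠ Matrix.diagonal d * A.transpose * Matrix.diagonal fun i => (d i)⁻¹ :=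
  exists_not_diagEquiv_of_symm_reducible_general A hsymm hA
end

section
/- Let A be an n×n complex Hermitian matrix. Then the polynomial f = det(diag(x_1,…,x_n) + A) ∈ ℂ[x_1,…,x_n] has real coefficients and is real stable: f has no zero (z_1,…,z_n) ∈ ℂ^n with Im(z_k) > 0 for all k. -/
open MvPolynomial Matrix

/-- The determinantal polynomial `det(diag(x₁,…,xₙ) + A)` of a Hermitian matrix has
real coefficients and is real stable: it has no zero all of whose coordinates have
strictly positive imaginary part. -/
theorem det_poly_of_hermitian_real_stable {n : ℕ}
    (A : Matrix (Fin n) (Fin n) ℂ) (hA : A.IsHermitian) :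
    (∀ m : Fin n →₀ ℕ,
        ((Matrix.diagonal (fun k => (X k : MvPolynomial (Fin n) ℂ))
          + A.map C).det.coeff m).im = 0) ∧
      ∀ z : Fin n → ℂ, (∀ k, 0 < (z k).im) →
        eval z (Matrix.diagonal (fun k => (X k : MvPolynomial (Fin n) ℂ))
          + A.map C).det ≠ 0 := by
  set M : Matrix (Fin n) (Fin n) (MvPolynomial (Fin n) ℂ) :=
    Matrix.diagonal (fun k => (X k : MvPolynomial (Fin n) ℂ)) + A.map C with hM
  constructor
  · -- real coefficients
    intro m
    have hmap : M.map (MvPolynomial.map (starRingEnd ℂ)) = M.transpose := by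
      ext i j
      have hAij : (starRingEnd ℂ) (A i j) = A j i := by
        conv_rhs => rw [← hA]
        simp [Matrix.conjTranspose_apply]
      simp [hM, Matrix.map_apply, Matrix.transpose_apply, Matrix.diagonal_apply,
        Matrix.add_apply, hAij, eq_comm (a := i) (b := j)]
      by_cases h : i = j <;> simp [h, eq_comm]
    have hdet : MvPolynomial.map (starRingEnd ℂ) M.det = M.det := by
      rw [RingHom.map_det, RingHom.mapMatrix_apply, hmap, Matrix.det_transpose]
    have := congrArg (fun p => MvPolynomial.coeff m p) hdet
    simp only [MvPolynomial.coeff_map] at this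
    have : (starRingEnd ℂ) (M.det.coeff m) = M.det.coeff m := this
    exact Complex.conj_eq_iff_im.mp this
  · -- real stability
    intro z hz h0
    have hmapz : M.map (eval z) = Matrix.diagonal z + A := by
      ext i j
      by_cases h : i = j <;>
        simp [hM, Matrix.map_apply, Matrix.add_apply, Matrix.diagonal_apply, h]
    have hdet0 : (Matrix.diagonal z + A).det = 0 := by
      rw [← hmapz, ← RingHom.mapMatrix_apply, ← RingHom.map_det]
      exact h0
    obtain ⟨v, hv, hBv⟩ := (Matrix.exists_mulVec_eq_zero_iff).mpr hdet0
    have key : star v ⬝ᵥ (Matrix.diagonal z *ᵥ v) + star v ⬝ᵥ (A *ᵥ v) = 0 := by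
      rw [← dotProduct_add, ← Matrix.add_mulVec, hBv, dotProduct_zero]
    -- the A part is real
    have hAreal : (star v ⬝ᵥ (A *ᵥ v)).im = 0 := by
      apply Complex.conj_eq_iff_im.mp
      calc (starRingEnd ℂ) (star v ⬝ᵥ (A *ᵥ v))
          = star (star v ⬝ᵥ (A *ᵥ v)) := rfl
        _ = star (A *ᵥ v) ⬝ᵥ v := by rw [Matrix.star_dotProduct, star_star]
        _ = (star v ᵥ* Aᴴ) ⬝ᵥ v := by rw [Matrix.star_mulVec]
        _ = star v ⬝ᵥ (Aᴴ *ᵥ v) := (Matrix.dotProduct_mulVec _ _ _).symm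
        _ = star v ⬝ᵥ (A *ᵥ v) := by rw [hA]
    -- the diagonal part has positive imaginary part
    have hdiag : 0 < (star v ⬝ᵥ (Matrix.diagonal z *ᵥ v)).im := by
      have hexp : (star v ⬝ᵥ (Matrix.diagonal z *ᵥ v)).im
          = ∑ i, (z i).im * Complex.normSq (v i) := by
        simp only [dotProduct, Matrix.mulVec_diagonal, Complex.im_sum]
        refine Finset.sum_congr rfl fun i _ => ?_
        have h1 : (star v) i * (z i * v i) = z i * ((Complex.normSq (v i) : ℂ)) := by
          rw [show (star v) i = (starRingEnd ℂ) (v i) from rfl, ← Complex.mul_conj]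
          ring
        rw [h1, Complex.mul_im]
        simp
      rw [hexp]
      obtain ⟨i, hi⟩ := Function.ne_iff.mp hv
      refine Finset.sum_pos' (fun j _ => ?_) ⟨i, Finset.mem_univ i, ?_⟩
      · exact mul_nonneg (le_of_lt (hz j)) (Complex.normSq_nonneg _)
      · exact mul_pos (hz i) (by simpa [Complex.normSq_pos] using hi)
    have := congrArg Complex.im key
    rw [Complex.add_im, hAreal, add_zero, Complex.zero_im] at this
    exact absurd this (ne_of_gt hdiag)
end
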